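/- Let α and Z be types, let f : α → Z be an encoder, and let D assign to each z ∈ Z a probability mass function D(z) on α (the decoder). Suppose x₁, …, xₙ are pairwise distinct elements of α (n ≥ 1) with f(x₁) = f(x₂) = ⋯ = f(xₙ). If D(f(xᵢ))(xᵢ) > 0 for every i, then the reconstruction negative log-likelihood satisfies −Σ_{i=1}^n log D(f(xᵢ))(xᵢ) ≥ n·log n. -/

import Mathlib

/-!
Apply `log y ≤ y - 1` at `y = n pᵢ` and sum over `i`: this gives
`n log n + Σ log pᵢ ≤ n Σ pᵢ - n ≤ 0`, because the `n` collapsed inputs are distinct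
points of the single distribution `D z`, so their probabilities sum to at most `1`.
-/

open Finset Real

theorem Finset.card_mul_log_card_le_neg_sum_log {ι : Type*} (s : Finset ι) (p : ι → ℝ)
    (hp : ∀ i ∈ s, 0 < p i) (hsum : ∑ i ∈ s, p i ≤ 1) :
    #s * log #s ≤ -∑ i ∈ s, log (p i) := by
  have key : ∀ i ∈ s, log #s + log (p i) ≤ #s * p i - 1 := fun i hi => by
    have hcard : (0 : ℝ) < #s := by exact_mod_cast card_pos.mpr ⟨i, hi⟩
    rw [← log_mul hcard.ne' (hp i hi).ne']
    exact log_le_sub_one_of_pos (mul_pos hcard (hp i hi))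
  have hsummed := sum_le_sum key
  rw [sum_add_distrib, sum_sub_distrib, ← mul_sum, sum_const, sum_const, nsmul_eq_mul,
    nsmul_eq_mul, mul_one] at hsummed
  have hscaled : (#s : ℝ) * ∑ i ∈ s, p i ≤ #s :=
    mul_le_of_le_one_right (Nat.cast_nonneg _) hsum
  linarith

theorem Function.Injective.sum_comp_le_of_hasSum {ι α : Type*} [Fintype ι] {q : α → ℝ}
    {a : ℝ} (hq : ∀ b, 0 ≤ q b) (h : HasSum q a) {x : ι → α} (hx : Function.Injective x) :
    ∑ i, q (x i) ≤ a :=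
  (tsum_fintype _).symm.trans_le ((tsum_comp_le_tsum_of_inj h.summable hq hx).trans_eq h.tsum_eq)

/-- Non-degeneracy core: if an encoder `f` collapses `n ≥ 1` pairwise distinct inputs to the
same latent code, and the decoder `D` assigns to each latent code a probability mass function,
then the reconstruction negative log-likelihood is at least `n·log n`. -/
theorem collapse_reconstruction_lower_bound {α Z : Type*}
    (f : α → Z) (D : Z → α → ℝ)
    (hD_nonneg : ∀ z a, 0 ≤ D z a) (hD_sum : ∀ z, HasSum (D z) 1)
    (n : ℕ) (hn : 1 ≤ n) (x : Fin n → α) (hx : Function.Injective x)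
    (hcollapse : ∀ i j, f (x i) = f (x j))
    (hpos : ∀ i, 0 < D (f (x i)) (x i)) :
    -(∑ i, Real.log (D (f (x i)) (x i))) ≥ n * Real.log n := by
  obtain ⟨z, hz⟩ : ∃ z, ∀ i, f (x i) = z := ⟨f (x ⟨0, hn⟩), fun i => hcollapse i _⟩
  simp only [hz] at hpos ⊢
  have hsum : ∑ i, D z (x i) ≤ 1 := hx.sum_comp_le_of_hasSum (hD_nonneg z) (hD_sum z)
  simpa using card_mul_log_card_le_neg_sum_log univ (fun i => D z (x i)) (fun i _ => hpos i) hsum
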